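/- arXiv:cs/0209018 — 8 statements merged into one kernel-verified Lean document; each statement's English description precedes it below -/
import Mathlib

section
/- If a language L ⊆ Σ* is recognized by a PRA-C with interval (p₁,p₂), then there exists a PRA-C which recognizes L with probability p, where p = p₂/(p₁+p₂) if p₁+p₂ ≥ 1, and p = (1−p₁)/(2−p₁−p₂) if p₁+p₂ < 1. -/
/-!
Any acceptance probability `P` of a PRA-C can be replaced by `t * P + (1 - t) * c` for
`t ∈ (0, 1]` and `c ∈ {0, 1}`: double the state set, run the automaton in the first copy, and at
`$` mix its `$`-matrix (weight `t`) with the permutation swapping the two copies (weight `1 - t`);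
the second copy accepts iff `c = 1`. This turns the interval `(p₁, p₂)` into
`(t p₁ + (1 - t) c, t p₂ + (1 - t) c)`, which is symmetric about `1/2` for
`t = 1 / (p₁ + p₂), c = 0` when `p₁ + p₂ ≥ 1`, and for `t = 1 / (2 - p₁ - p₂), c = 1` otherwise.
-/

/-- A real square matrix is doubly stochastic if all entries are nonnegative and
every row and every column sums to 1. -/
def DoublyStochastic {n : ℕ} (A : Matrix (Fin n) (Fin n) ℝ) : Prop :=
  (∀ i j, 0 ≤ A i j) ∧ (∀ i, ∑ j, A i j = 1) ∧ (∀ j, ∑ i, A i j = 1)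

/-- A 1-way probabilistic reversible C-automaton (PRA-C) over input alphabet `α`:
a finite state set `Fin n`, an initial state, a set of accepting states, and
a doubly stochastic matrix for each symbol of the working alphabet
(the letters of `α` together with the end-markers `#` and `$`). -/
structure PRAC (α : Type) where
  n : ℕ
  q0 : Fin n
  F : Finset (Fin n)
  V : α → Matrix (Fin n) (Fin n) ℝ
  Vhash : Matrix (Fin n) (Fin n) ℝ
  Vdollar : Matrix (Fin n) (Fin n) ℝ
  ds : ∀ a, DoublyStochastic (V a)
  ds_hash : DoublyStochastic Vhash
  ds_dollar : DoublyStochastic Vdollar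

namespace PRAC

variable {α : Type}

/-- Acceptance probability of a word `w = σ₁…σ_k`: the total mass on accepting states of
`V_$ ⬝ V_{σ_k} ⬝ ⋯ ⬝ V_{σ₁} ⬝ V_# ⬝ e_{q₀}`. -/
def accProb (A : PRAC α) (w : List α) : ℝ :=
  ∑ q ∈ A.F,
    (A.Vdollar.mulVec
      (w.foldl (fun v a => (A.V a).mulVec v) (A.Vhash.mulVec (Pi.single A.q0 1)))) q

/-- Recognition of a language with interval `(p₁, p₂)`. -/
def Recognizes (A : PRAC α) (L : Set (List α)) (p1 p2 : ℝ) : Prop :=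
  0 ≤ p1 ∧ p1 < p2 ∧ p2 ≤ 1 ∧
  (∀ w ∈ L, p2 ≤ A.accProb w) ∧ (∀ w ∉ L, A.accProb w ≤ p1)

/-- Recognition with probability `p`, i.e. with interval `(1 - p, p)`. -/
def RecognizesWithProb (A : PRAC α) (L : Set (List α)) (p : ℝ) : Prop :=
  A.Recognizes L (1 - p) p

end PRAC

open Matrix Finset

theorem doublyStochastic_iff_mem {n : ℕ} {M : Matrix (Fin n) (Fin n) ℝ} :
    DoublyStochastic M ↔ M ∈ doublyStochastic ℝ (Fin n) :=
  mem_doublyStochastic_iff_sum.symm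

namespace Matrix

variable {R m n : Type*} [Fintype m] [Fintype n]

section Semiring

variable [NonUnitalNonAssocSemiring R]

theorem fromBlocks_zero_zero_mulVec_elim_zero (M : Matrix m m R) (N : Matrix n n R)
    (v : m → R) : fromBlocks M 0 0 N *ᵥ Sum.elim v 0 = Sum.elim (M *ᵥ v) 0 := by
  rw [fromBlocks_mulVec]
  simp

theorem reindex_mulVec_comp_symm (e : m ≃ n) (M : Matrix m m R) (v : m → R) :
    reindex e e M *ᵥ (v ∘ e.symm) = (M *ᵥ v) ∘ e.symm := by
  simp [reindex_apply, submatrix_mulVec_equiv, Function.comp_assoc]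

end Semiring

theorem fromBlocks_zero_zero_mem_doublyStochastic [Semiring R] [PartialOrder R]
    [IsOrderedRing R] [DecidableEq m] [DecidableEq n] {M : Matrix m m R} {N : Matrix n n R}
    (hM : M ∈ doublyStochastic R m) (hN : N ∈ doublyStochastic R n) :
    fromBlocks M 0 0 N ∈ doublyStochastic R (m ⊕ n) := by
  refine mem_doublyStochastic.2 ⟨?_, ?_, ?_⟩
  · rintro (i | i) (j | j) <;> simp [nonneg_of_mem_doublyStochastic, hM, hN]
  · rw [← Sum.elim_one_one, fromBlocks_mulVec]
    simp [mulVec_one_of_mem_doublyStochastic, hM, hN]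
  · rw [← Sum.elim_one_one, vecMul_fromBlocks]
    simp [one_vecMul_of_mem_doublyStochastic, hM, hN]

theorem smul_fromBlocks_add_smul_permMatrix_sumComm_mulVec [CommRing R] [DecidableEq m]
    (M N : Matrix m m R) (a c : R) (v : m → R) :
    (a • fromBlocks M 0 0 N + c • Equiv.Perm.permMatrix R (Equiv.sumComm m m)) *ᵥ Sum.elim v 0 =
      Sum.elim (a • (M *ᵥ v)) (c • v) := by
  rw [add_mulVec, smul_mulVec, smul_mulVec, fromBlocks_zero_zero_mulVec_elim_zero,
    permMatrix_mulVec]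
  ext (i | i) <;> simp

end Matrix

theorem Finset.sum_map_disjSum_comp_symm {ι κ ν M : Type*} [AddCommMonoid M] (e : ι ⊕ κ ≃ ν)
    (s : Finset ι) (t : Finset κ) (f : ι ⊕ κ → M) :
    ∑ q ∈ (s.disjSum t).map e.toEmbedding, (f ∘ e.symm) q =
      ∑ i ∈ s, f (.inl i) + ∑ k ∈ t, f (.inr k) := by
  simp [sum_disjSum]

namespace PRAC

variable {α : Type}

def run (A : PRAC α) (w : List α) : Fin A.n → ℝ :=
  w.foldl (fun v a => A.V a *ᵥ v) (A.Vhash *ᵥ Pi.single A.q0 1)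

theorem accProb_eq_sum_run (A : PRAC α) (w : List α) :
    A.accProb w = ∑ q ∈ A.F, (A.Vdollar *ᵥ A.run w) q :=
  rfl

theorem sum_run (A : PRAC α) (w : List α) : ∑ q, A.run w q = 1 := by
  suffices h : ∀ (w : List α) v, ∑ q, w.foldl (fun v a => A.V a *ᵥ v) v q = ∑ q, v q by
    rw [run, h, sum_mulVec_of_mem_doublyStochastic (doublyStochastic_iff_mem.1 A.ds_hash)]
    simp
  intro w
  induction w with
  | nil => simp
  | cons a w ih =>
    intro v
    rw [List.foldl_cons, ih,
      sum_mulVec_of_mem_doublyStochastic (doublyStochastic_iff_mem.1 (A.ds a))]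

noncomputable def doubleBlock {n : ℕ} (M : Matrix (Fin n) (Fin n) ℝ) :
    Matrix (Fin (n + n)) (Fin (n + n)) ℝ :=
  reindex finSumFinEquiv finSumFinEquiv (fromBlocks M 0 0 M)

theorem doublyStochastic_doubleBlock {n : ℕ} {M : Matrix (Fin n) (Fin n) ℝ}
    (hM : DoublyStochastic M) : DoublyStochastic (doubleBlock M) :=
  doublyStochastic_iff_mem.2 <| reindex_mem_doublyStochastic <|
    fromBlocks_zero_zero_mem_doublyStochastic (doublyStochastic_iff_mem.1 hM)
      (doublyStochastic_iff_mem.1 hM)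

theorem doubleBlock_mulVec {n : ℕ} (M : Matrix (Fin n) (Fin n) ℝ) (v : Fin n → ℝ) :
    doubleBlock M *ᵥ (Sum.elim v 0 ∘ finSumFinEquiv.symm) =
      Sum.elim (M *ᵥ v) 0 ∘ finSumFinEquiv.symm := by
  rw [doubleBlock, reindex_mulVec_comp_symm, fromBlocks_zero_zero_mulVec_elim_zero]

noncomputable def mixConst (A : PRAC α) (t : unitInterval) (b : Bool) : PRAC α where
  n := A.n + A.n
  q0 := finSumFinEquiv (.inl A.q0)
  F := (A.F.disjSum (if b then univ else ∅)).map finSumFinEquiv.toEmbedding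
  V a := doubleBlock (A.V a)
  Vhash := doubleBlock A.Vhash
  Vdollar := reindex finSumFinEquiv finSumFinEquiv
    ((t : ℝ) • fromBlocks A.Vdollar 0 0 A.Vdollar +
      (unitInterval.symm t : ℝ) • Equiv.Perm.permMatrix ℝ (Equiv.sumComm _ _))
  ds a := doublyStochastic_doubleBlock (A.ds a)
  ds_hash := doublyStochastic_doubleBlock A.ds_hash
  ds_dollar := by
    refine doublyStochastic_iff_mem.2 (reindex_mem_doublyStochastic ?_)
    refine convex_doublyStochastic ?_ permMatrix_mem_doublyStochastic t.2.1
      (unitInterval.symm t).2.1 ?_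
    · exact fromBlocks_zero_zero_mem_doublyStochastic (doublyStochastic_iff_mem.1 A.ds_dollar)
        (doublyStochastic_iff_mem.1 A.ds_dollar)
    · simp

theorem run_mixConst (A : PRAC α) (t : unitInterval) (b : Bool) (w : List α) :
    (A.mixConst t b).run w = Sum.elim (A.run w) 0 ∘ finSumFinEquiv.symm := by
  have hstart : (A.mixConst t b).Vhash *ᵥ Pi.single (A.mixConst t b).q0 1 =
      Sum.elim (A.Vhash *ᵥ Pi.single A.q0 1) (0 : Fin A.n → ℝ) ∘ finSumFinEquiv.symm := by
    rw [← doubleBlock_mulVec, Sum.elim_single_zero, Pi.single_comp_equiv, Equiv.symm_symm]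
    rfl
  rw [run, hstart]
  exact List.foldl_hom (fun v : Fin A.n → ℝ => Sum.elim v 0 ∘ finSumFinEquiv.symm)
    fun v a => doubleBlock_mulVec (A.V a) v

theorem accProb_mixConst (A : PRAC α) (t : unitInterval) (b : Bool) (w : List α) :
    (A.mixConst t b).accProb w = t * A.accProb w + (1 - t) * if b then 1 else 0 := by
  have hfinal : (A.mixConst t b).Vdollar *ᵥ (A.mixConst t b).run w =
      Sum.elim ((t : ℝ) • (A.Vdollar *ᵥ A.run w)) ((1 - t : ℝ) • A.run w) ∘
        finSumFinEquiv.symm := by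
    rw [run_mixConst]
    exact (reindex_mulVec_comp_symm _ _ _).trans
      (congrArg (· ∘ _) (smul_fromBlocks_add_smul_permMatrix_sumComm_mulVec _ _ _ _ _))
  rw [accProb_eq_sum_run, hfinal, accProb_eq_sum_run]
  refine (sum_map_disjSum_comp_symm _ _ _ _).trans ?_
  cases b <;> simp [← mul_sum, sum_run]

theorem Recognizes.mixConst {A : PRAC α} {L : Set (List α)} {p1 p2 : ℝ}
    (h : A.Recognizes L p1 p2) {t : unitInterval} (ht : 0 < (t : ℝ)) (b : Bool) :
    (A.mixConst t b).Recognizes L (t * p1 + (1 - t) * if b then 1 else 0)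
      (t * p2 + (1 - t) * if b then 1 else 0) := by
  obtain ⟨hp1, hp12, hp2, hacc, hrej⟩ := h
  have ht1 : (t : ℝ) ≤ 1 := t.2.2
  have hc : (0 : ℝ) ≤ if b then 1 else 0 := by split_ifs <;> norm_num
  have hc1 : (if b then 1 else 0 : ℝ) ≤ 1 := by split_ifs <;> norm_num
  refine ⟨by positivity, by gcongr, ?_, fun w hw => ?_, fun w hw => ?_⟩
  · nlinarith
  · rw [accProb_mixConst]
    gcongr
    exact hacc w hw
  · rw [accProb_mixConst]
    gcongr
    exact hrej w hw

end PRAC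

/-- If a language is recognized by a PRA-C with interval `(p₁,p₂)`, then there exists a
PRA-C which recognizes the language with probability `p₂/(p₁+p₂)` if `p₁+p₂ ≥ 1`, and
with probability `(1-p₁)/(2-p₁-p₂)` if `p₁+p₂ < 1`. -/
theorem prac_interval_to_prob {α : Type} (L : Set (List α)) (A : PRAC α) (p1 p2 : ℝ)
    (h : A.Recognizes L p1 p2) :
    ∃ B : PRAC α, B.RecognizesWithProb L
      (if 1 ≤ p1 + p2 then p2 / (p1 + p2) else (1 - p1) / (2 - p1 - p2)) := by
  split_ifs with hs
  · have hpos : 0 < p1 + p2 := by linarith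
    let t : unitInterval := ⟨1 / (p1 + p2), (one_div_pos.2 hpos).le, (div_le_one hpos).2 hs⟩
    refine ⟨A.mixConst t false, ?_⟩
    rw [PRAC.RecognizesWithProb]
    convert h.mixConst (t := t) (one_div_pos.2 hpos) false using 2
    · simp [t]
      field_simp
      ring
    · simp [t]
      field_simp
  · have hpos : 0 < 2 - p1 - p2 := by linarith
    let t : unitInterval :=
      ⟨1 / (2 - p1 - p2), (one_div_pos.2 hpos).le, (div_le_one hpos).2 (by linarith)⟩
    refine ⟨A.mixConst t true, ?_⟩
    rw [PRAC.RecognizesWithProb]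
    convert h.mixConst (t := t) (one_div_pos.2 hpos) true using 2
    · simp [t]
      field_simp
      ring
    · simp [t]
      field_simp
      ring
end

section
/- If languages L₁, L₂ ⊆ Σ* are each recognized by some PRA-C with some interval, then each of the languages L₁ ∩ L₂, L₁ ∪ L₂, and the complement Σ* \ L₁ is recognized by some PRA-C with some interval. -/
/-!
Complementing the accepting set turns an acceptance probability `x` into `1 - x`, and running
two automata in parallel (Kronecker product of the transition matrices, again doubly stochastic)
multiplies acceptance probabilities. Composing these realizes `x ↦ 1 - (1 - x ^ m) ^ N`, which
for suitable `m`, `N` maps any interval `(p₁, p₂)` to one containing `(1/4, 3/4)`. With that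
interval the product automaton recognizes `L₁ ∩ L₂` with interval `(1/4, 9/16)`, and unions
follow by De Morgan.
-/

open Matrix Finset
open scoped Kronecker

section Kronecker

variable {R l m n p : Type*} [Fintype m] [Fintype p]

theorem Matrix.kronecker_mulVec_mul [CommSemiring R] (A : Matrix l m R) (B : Matrix n p R)
    (u : m → R) (v : p → R) :
    (A ⊗ₖ B) *ᵥ (fun j => u j.1 * v j.2) = fun i => (A *ᵥ u) i.1 * (B *ᵥ v) i.2 := by
  ext i
  simp only [mulVec, dotProduct, kroneckerMap_apply, Fintype.sum_prod_type, sum_mul_sum]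
  exact sum_congr rfl fun _ _ => sum_congr rfl fun _ _ => by ring

theorem Matrix.kronecker_mem_doublyStochastic [CommSemiring R] [PartialOrder R]
    [IsOrderedRing R] [DecidableEq m] [DecidableEq p] {A : Matrix m m R} {B : Matrix p p R}
    (hA : A ∈ doublyStochastic R m) (hB : B ∈ doublyStochastic R p) :
    A ⊗ₖ B ∈ doublyStochastic R (m × p) := by
  rw [mem_doublyStochastic_iff_sum] at hA hB ⊢
  refine ⟨fun i j => mul_nonneg (hA.1 _ _) (hB.1 _ _), fun i => ?_, fun j => ?_⟩
  · simp [Fintype.sum_prod_type, kroneckerMap_apply, ← mul_sum, hA.2.1, hB.2.1]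
  · simp [Fintype.sum_prod_type, kroneckerMap_apply, ← mul_sum, hA.2.2, hB.2.2]

end Kronecker

section Stochastic

variable {R ι α : Type*} [Semiring R] [PartialOrder R] [IsOrderedRing R] [Fintype ι]
  [DecidableEq ι]

theorem mulVec_mem_stdSimplex {M : Matrix ι ι R} (hM : M ∈ colStochastic R ι) {x : ι → R}
    (hx : x ∈ stdSimplex R ι) : M *ᵥ x ∈ stdSimplex R ι :=
  ⟨nonneg_mulVec_of_mem_colStochastic hM hx.1, (sum_mulVec_of_mem_colStochastic hM).trans hx.2⟩

theorem foldl_mulVec_mem_stdSimplex {V : α → Matrix ι ι R} (hV : ∀ a, V a ∈ colStochastic R ι)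
    (w : List α) {x : ι → R} (hx : x ∈ stdSimplex R ι) :
    w.foldl (fun v a => V a *ᵥ v) x ∈ stdSimplex R ι := by
  induction w generalizing x with
  | nil => exact hx
  | cons a w ih => exact ih (mulVec_mem_stdSimplex (hV a) hx)

end Stochastic

section FinKronecker

variable {R α : Type*} [CommSemiring R] {n m : ℕ}

def Matrix.kroneckerFin (M : Matrix (Fin n) (Fin n) R) (N : Matrix (Fin m) (Fin m) R) :
    Matrix (Fin (n * m)) (Fin (n * m)) R :=
  reindex finProdFinEquiv finProdFinEquiv (M ⊗ₖ N)

def vecKroneckerFin (u : Fin n → R) (v : Fin m → R) : Fin (n * m) → R :=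
  (fun j => u j.1 * v j.2) ∘ finProdFinEquiv.symm

theorem Matrix.kroneckerFin_mulVec (M : Matrix (Fin n) (Fin n) R) (N : Matrix (Fin m) (Fin m) R)
    (u : Fin n → R) (v : Fin m → R) :
    M.kroneckerFin N *ᵥ vecKroneckerFin u v = vecKroneckerFin (M *ᵥ u) (N *ᵥ v) := by
  rw [kroneckerFin, reindex_apply, submatrix_mulVec_equiv, vecKroneckerFin, Equiv.symm_symm,
    Function.comp_assoc, Equiv.symm_comp_self, Function.comp_id, kronecker_mulVec_mul]
  rfl

theorem foldl_kroneckerFin_mulVec (M : α → Matrix (Fin n) (Fin n) R)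
    (N : α → Matrix (Fin m) (Fin m) R) (w : List α) (u : Fin n → R) (v : Fin m → R) :
    w.foldl (fun x a => (M a).kroneckerFin (N a) *ᵥ x) (vecKroneckerFin u v) =
      vecKroneckerFin (w.foldl (fun x a => M a *ᵥ x) u) (w.foldl (fun x a => N a *ᵥ x) v) := by
  induction w generalizing u v with
  | nil => rfl
  | cons a w ih => rw [List.foldl_cons, kroneckerFin_mulVec, ih]; rfl

theorem vecKroneckerFin_single (i : Fin n) (j : Fin m) :
    vecKroneckerFin (Pi.single i (1 : R)) (Pi.single j 1) =
      Pi.single (finProdFinEquiv (i, j)) 1 := by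
  ext k
  obtain ⟨⟨i', j'⟩, rfl⟩ := finProdFinEquiv.surjective k
  by_cases hi : i' = i <;> by_cases hj : j' = j <;>
    simp [vecKroneckerFin, Pi.single_apply, hi, hj]

theorem sum_map_vecKroneckerFin (s : Finset (Fin n)) (t : Finset (Fin m)) (u : Fin n → R)
    (v : Fin m → R) :
    ∑ k ∈ (s ×ˢ t).map finProdFinEquiv.toEmbedding, vecKroneckerFin u v k =
      (∑ i ∈ s, u i) * ∑ j ∈ t, v j := by
  simp only [sum_map, sum_product, sum_mul_sum, Equiv.coe_toEmbedding, vecKroneckerFin,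
    Function.comp_apply, Equiv.symm_apply_apply]

end FinKronecker

theorem DoublyStochastic.mem_doublyStochastic {n : ℕ} {M : Matrix (Fin n) (Fin n) ℝ}
    (hM : DoublyStochastic M) : M ∈ doublyStochastic ℝ (Fin n) :=
  mem_doublyStochastic_iff_sum.2 hM

theorem DoublyStochastic.one {n : ℕ} : DoublyStochastic (1 : Matrix (Fin n) (Fin n) ℝ) :=
  mem_doublyStochastic_iff_sum.1 (doublyStochastic ℝ (Fin n)).one_mem

theorem DoublyStochastic.kroneckerFin {n m : ℕ} {M : Matrix (Fin n) (Fin n) ℝ}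
    {N : Matrix (Fin m) (Fin m) ℝ} (hM : DoublyStochastic M) (hN : DoublyStochastic N) :
    DoublyStochastic (M.kroneckerFin N) :=
  mem_doublyStochastic_iff_sum.1 <| reindex_mem_doublyStochastic <|
    kronecker_mem_doublyStochastic hM.mem_doublyStochastic hN.mem_doublyStochastic

theorem DoublyStochastic.mem_colStochastic {n : ℕ} {M : Matrix (Fin n) (Fin n) ℝ}
    (hM : DoublyStochastic M) : M ∈ colStochastic ℝ (Fin n) :=
  (mem_doublyStochastic_iff_mem_rowStochastic_and_mem_colStochastic.1 hM.mem_doublyStochastic).2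

section Amplification

theorem one_sub_one_sub_pow_le {x : ℝ} (hx : x ≤ 2) (N : ℕ) : 1 - (1 - x) ^ N ≤ N * x := by
  have := one_add_mul_le_pow (a := -x) (by linarith) N
  rw [← sub_eq_add_neg] at this
  linarith

theorem one_sub_pow_le_inv_one_add_mul {s : ℝ} (hs0 : 0 ≤ s) (hs1 : s ≤ 1) (N : ℕ) :
    (1 - s) ^ N ≤ (1 + N * s)⁻¹ :=
  calc (1 - s) ^ N
      ≤ Real.exp (-s) ^ N :=
        pow_le_pow_left₀ (by linarith) (by linarith [Real.add_one_le_exp (-s)]) N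
    _ = (Real.exp (N * s))⁻¹ := by rw [← Real.exp_nat_mul, ← Real.exp_neg, mul_neg]
    _ ≤ (1 + N * s)⁻¹ :=
        inv_anti₀ (by positivity) (by linarith [Real.add_one_le_exp (N * s)])

/- `m` separates the powers by a factor 16; `N ≈ 3 / p₂ᵐ` then lifts `p₂ᵐ` above `3/4`, while
Bernoulli's inequality keeps `p₁ᵐ` below `1/4`. -/
theorem exists_amplification_exponents {p1 p2 : ℝ} (hp1 : 0 ≤ p1) (hp12 : p1 < p2)
    (hp2 : p2 ≤ 1) :
    ∃ m N : ℕ, m ≠ 0 ∧ N ≠ 0 ∧ 1 - (1 - p1 ^ m) ^ N ≤ 1 / 4 ∧ 3 / 4 ≤ 1 - (1 - p2 ^ m) ^ N := by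
  have hp2_pos : 0 < p2 := hp1.trans_lt hp12
  obtain ⟨m, hm⟩ : ∃ m : ℕ, (p1 / p2) ^ m < 1 / 16 :=
    exists_pow_lt_of_lt_one (by norm_num) ((div_lt_one hp2_pos).2 hp12)
  set s := p2 ^ m
  have hs_pos : 0 < s := pow_pos hp2_pos m
  have hs_le : s ≤ 1 := pow_le_one₀ hp2_pos.le hp2
  have hp1m : p1 ^ m ≤ s / 16 := by
    rw [show p1 ^ m = (p1 / p2) ^ m * s by rw [div_pow, div_mul_cancel₀ _ hs_pos.ne']]
    nlinarith
  obtain ⟨N, hN3, hN4⟩ : ∃ N : ℕ, 3 ≤ N * s ∧ N * s ≤ 4 := by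
    refine ⟨⌈3 / s⌉₊, (div_le_iff₀ hs_pos).1 (Nat.le_ceil _), ?_⟩
    have := Nat.ceil_lt_add_one (div_nonneg zero_le_three hs_pos.le)
    calc (⌈3 / s⌉₊ : ℝ) * s ≤ (3 / s + 1) * s := by gcongr
      _ = 3 + s := by field_simp
      _ ≤ 4 := by linarith
  refine ⟨m, N, ?_, ?_, ?_, ?_⟩
  · rintro rfl
    norm_num at hm
  · rintro rfl
    norm_num at hN3
  · calc 1 - (1 - p1 ^ m) ^ N ≤ N * p1 ^ m := one_sub_one_sub_pow_le (by linarith) N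
      _ ≤ N * (s / 16) := by gcongr
      _ ≤ 1 / 4 := by linarith
  · have := one_sub_pow_le_inv_one_add_mul hs_pos.le hs_le N
    have : (1 + N * s)⁻¹ ≤ (4 : ℝ)⁻¹ := inv_anti₀ (by norm_num) (by linarith)
    linarith

end Amplification

namespace PRAC

variable {α : Type}

def finalDist (A : PRAC α) (w : List α) : Fin A.n → ℝ :=
  A.Vdollar *ᵥ w.foldl (fun v a => A.V a *ᵥ v) (A.Vhash *ᵥ Pi.single A.q0 1)

theorem accProb_eq_sum_finalDist (A : PRAC α) (w : List α) :
    A.accProb w = ∑ q ∈ A.F, A.finalDist w q :=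
  rfl

theorem finalDist_mem_stdSimplex (A : PRAC α) (w : List α) :
    A.finalDist w ∈ stdSimplex ℝ (Fin A.n) :=
  mulVec_mem_stdSimplex A.ds_dollar.mem_colStochastic <|
    foldl_mulVec_mem_stdSimplex (fun a => (A.ds a).mem_colStochastic) w <|
      mulVec_mem_stdSimplex A.ds_hash.mem_colStochastic (single_mem_stdSimplex ℝ A.q0)

theorem accProb_nonneg (A : PRAC α) (w : List α) : 0 ≤ A.accProb w :=
  sum_nonneg fun q _ => (A.finalDist_mem_stdSimplex w).1 q

theorem accProb_le_one (A : PRAC α) (w : List α) : A.accProb w ≤ 1 := by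
  rw [accProb_eq_sum_finalDist, ← (A.finalDist_mem_stdSimplex w).2]
  exact sum_le_univ_sum_of_nonneg (A.finalDist_mem_stdSimplex w).1

def compl (A : PRAC α) : PRAC α := { A with F := A.Fᶜ }

theorem accProb_compl (A : PRAC α) (w : List α) : A.compl.accProb w = 1 - A.accProb w := by
  rw [eq_sub_iff_add_eq, ← (A.finalDist_mem_stdSimplex w).2, ← sum_compl_add_sum A.F]
  rfl

def tensor (A B : PRAC α) : PRAC α where
  n := A.n * B.n
  q0 := finProdFinEquiv (A.q0, B.q0)
  F := (A.F ×ˢ B.F).map finProdFinEquiv.toEmbedding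
  V a := (A.V a).kroneckerFin (B.V a)
  Vhash := A.Vhash.kroneckerFin B.Vhash
  Vdollar := A.Vdollar.kroneckerFin B.Vdollar
  ds a := (A.ds a).kroneckerFin (B.ds a)
  ds_hash := A.ds_hash.kroneckerFin B.ds_hash
  ds_dollar := A.ds_dollar.kroneckerFin B.ds_dollar

theorem finalDist_tensor (A B : PRAC α) (w : List α) :
    (A.tensor B).finalDist w = vecKroneckerFin (A.finalDist w) (B.finalDist w) := by
  change A.Vdollar.kroneckerFin B.Vdollar *ᵥ
      w.foldl (fun v a => (A.V a).kroneckerFin (B.V a) *ᵥ v)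
        (A.Vhash.kroneckerFin B.Vhash *ᵥ Pi.single (finProdFinEquiv (A.q0, B.q0)) 1) = _
  rw [← vecKroneckerFin_single, kroneckerFin_mulVec, foldl_kroneckerFin_mulVec,
    kroneckerFin_mulVec]
  rfl

theorem accProb_tensor (A B : PRAC α) (w : List α) :
    (A.tensor B).accProb w = A.accProb w * B.accProb w := by
  rw [accProb_eq_sum_finalDist, finalDist_tensor]
  exact sum_map_vecKroneckerFin _ _ _ _

def acceptAll : PRAC α where
  n := 1
  q0 := 0
  F := univ
  V _ := 1
  Vhash := 1
  Vdollar := 1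
  ds _ := DoublyStochastic.one
  ds_hash := DoublyStochastic.one
  ds_dollar := DoublyStochastic.one

theorem accProb_acceptAll (w : List α) : (acceptAll : PRAC α).accProb w = 1 :=
  ((acceptAll : PRAC α).finalDist_mem_stdSimplex w).2

def tensorPow (A : PRAC α) : ℕ → PRAC α
  | 0 => acceptAll
  | k + 1 => A.tensor (A.tensorPow k)

theorem accProb_tensorPow (A : PRAC α) (k : ℕ) (w : List α) :
    (A.tensorPow k).accProb w = A.accProb w ^ k := by
  induction k with
  | zero => exact accProb_acceptAll w
  | succ k ih => rw [tensorPow, accProb_tensor, ih, pow_succ']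

section Recognizes

variable {A B : PRAC α} {L L1 L2 : Set (List α)} {p1 p2 q1 q2 : ℝ}

theorem Recognizes.compl (h : A.Recognizes L p1 p2) :
    A.compl.Recognizes Lᶜ (1 - p2) (1 - p1) := by
  obtain ⟨h0, h12, h2, hin, hout⟩ := h
  refine ⟨by linarith, by linarith, by linarith, fun w hw => ?_, fun w hw => ?_⟩
  · rw [accProb_compl]; linarith [hout w hw]
  · rw [accProb_compl]; linarith [hin w (Set.not_notMem.1 hw)]

theorem Recognizes.tensorPow (h : A.Recognizes L p1 p2) {k : ℕ} (hk : k ≠ 0) :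
    (A.tensorPow k).Recognizes L (p1 ^ k) (p2 ^ k) := by
  obtain ⟨h0, h12, h2, hin, hout⟩ := h
  refine ⟨pow_nonneg h0 k, pow_lt_pow_left₀ h12 h0 hk, pow_le_one₀ (h0.trans h12.le) h2,
    fun w hw => ?_, fun w hw => ?_⟩
  · rw [accProb_tensorPow]; exact pow_le_pow_left₀ (h0.trans h12.le) (hin w hw) k
  · rw [accProb_tensorPow]; exact pow_le_pow_left₀ (A.accProb_nonneg w) (hout w hw) k

theorem Recognizes.mono (h : A.Recognizes L p1 p2) (hq1 : 0 ≤ q1) (hpq1 : p1 ≤ q1)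
    (hq12 : q1 < q2) (hqp2 : q2 ≤ p2) : A.Recognizes L q1 q2 := by
  obtain ⟨-, -, h2, hin, hout⟩ := h
  exact ⟨hq1, hq12, hqp2.trans h2, fun w hw => hqp2.trans (hin w hw),
    fun w hw => (hout w hw).trans hpq1⟩

theorem Recognizes.inter (hA : A.Recognizes L1 p1 p2) (hB : B.Recognizes L2 q1 q2)
    (h : max p1 q1 < p2 * q2) :
    (A.tensor B).Recognizes (L1 ∩ L2) (max p1 q1) (p2 * q2) := by
  obtain ⟨hp1, hp12, hp2, hinA, houtA⟩ := hA
  obtain ⟨hq1, hq12, hq2, hinB, houtB⟩ := hB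
  have hq2_nonneg : 0 ≤ q2 := hq1.trans hq12.le
  refine ⟨hp1.trans (le_max_left _ _), h, mul_le_one₀ hp2 hq2_nonneg hq2, ?_, fun w hw => ?_⟩
  · rintro w ⟨hw1, hw2⟩
    rw [accProb_tensor]
    exact mul_le_mul (hinA w hw1) (hinB w hw2) hq2_nonneg (A.accProb_nonneg w)
  rw [accProb_tensor]
  by_cases hw1 : w ∈ L1
  · have hw2 : w ∉ L2 := fun hw2 => hw ⟨hw1, hw2⟩
    calc A.accProb w * B.accProb w
        ≤ B.accProb w := mul_le_of_le_one_left (B.accProb_nonneg w) (A.accProb_le_one w)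
      _ ≤ q1 := houtB w hw2
      _ ≤ max p1 q1 := le_max_right _ _
  · calc A.accProb w * B.accProb w
        ≤ A.accProb w := mul_le_of_le_one_right (A.accProb_nonneg w) (B.accProb_le_one w)
      _ ≤ p1 := houtA w hw1
      _ ≤ max p1 q1 := le_max_left _ _

theorem Recognizes.union (hA : A.Recognizes L1 p1 p2) (hB : B.Recognizes L2 q1 q2)
    (h : max (1 - p2) (1 - q2) < (1 - p1) * (1 - q1)) :
    (A.compl.tensor B.compl).compl.Recognizes (L1 ∪ L2)
      (1 - (1 - p1) * (1 - q1)) (1 - max (1 - p2) (1 - q2)) := by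
  simpa only [Set.compl_inter, compl_compl] using (hA.compl.inter hB.compl h).compl

theorem Recognizes.amplify (h : A.Recognizes L p1 p2) :
    ∃ B : PRAC α, B.Recognizes L (1 / 4) (3 / 4) := by
  obtain ⟨m, N, hm, hN, hlo, hhi⟩ := exists_amplification_exponents h.1 h.2.1 h.2.2.1
  have hB := ((h.tensorPow hm).compl.tensorPow hN).compl
  rw [compl_compl] at hB
  exact ⟨_, hB.mono (by norm_num) hlo (by norm_num) hhi⟩

end Recognizes

end PRAC

/-- The class of languages recognized by PRA-C is closed under intersection, union and
complement. -/
theorem prac_closed_boolean {α : Type} (L1 L2 : Set (List α)) (A1 A2 : PRAC α)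
    (p11 p12 p21 p22 : ℝ)
    (h1 : A1.Recognizes L1 p11 p12) (h2 : A2.Recognizes L2 p21 p22) :
    (∃ (B : PRAC α) (q1 q2 : ℝ), B.Recognizes (L1 ∩ L2) q1 q2) ∧
    (∃ (B : PRAC α) (q1 q2 : ℝ), B.Recognizes (L1 ∪ L2) q1 q2) ∧
    (∃ (B : PRAC α) (q1 q2 : ℝ), B.Recognizes L1ᶜ q1 q2) := by
  obtain ⟨B1, hB1⟩ := h1.amplify
  obtain ⟨B2, hB2⟩ := h2.amplify
  exact ⟨⟨_, _, _, hB1.inter hB2 (by norm_num)⟩, ⟨_, _, _, hB1.union hB2 (by norm_num)⟩,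
    ⟨_, _, _, h1.compl⟩⟩
end

section
/- For every natural number n ≥ 1, the language Lₙ = a₁*a₂*…aₙ* over the n-letter alphabet {a₁,…,aₙ} (i.e., the set of words whose letters occur in nondecreasing index order, equivalently the sorted lists over Fin n) is recognized by a PRA-C with n+1 states with interval (1 − 1/(⌊n²/4⌋ + n + 1), 1). -/
/-!
Letter `aᵢ` acts on the states `0, …, n` by averaging separately over the blocks `{0, …, i-1}`
and `{i, …, n}`, and `n` is the only rejecting state. Along a sorted word the state vector stays
uniform on the block of the last letter read, so no mass ever reaches state `n`. At the first
descent `aᵢ` followed by `aⱼ` with `j < i`, the vector, uniform on `{0, …, i-1}`, is averaged by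
`aⱼ` into one all of whose entries are at least `1/(⌊n²/4⌋ + n + 1)`; this rests on
`i (n - j + 1) ≤ (⌊n²/4⌋ + n + 1)(i - j)`, an instance of AM-GM. Every later letter is row
stochastic, so the entrywise lower bound persists, and state `n` keeps at least that much mass.
-/

open Finset Matrix

namespace Matrix

variable {ι α : Type*} [Fintype ι] [DecidableEq ι]

lemma le_mulVec_of_mem_rowStochastic {M : Matrix ι ι ℝ} (hM : M ∈ rowStochastic ℝ ι)
    {x : ι → ℝ} {c : ℝ} (hx : ∀ j, c ≤ x j) (i : ι) : c ≤ (M *ᵥ x) i := by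
  have h := nonneg_mulVec_of_mem_rowStochastic hM (x := x - c • 1) (fun j => by simp [hx j]) i
  rwa [mulVec_sub, mulVec_smul, one_vecMul_of_mem_rowStochastic hM, Pi.sub_apply, sub_nonneg,
    Pi.smul_apply, Pi.one_apply, smul_eq_mul, mul_one] at h

lemma le_foldl_mulVec_of_mem_rowStochastic {M : α → Matrix ι ι ℝ}
    (hM : ∀ a, M a ∈ rowStochastic ℝ ι) (w : List α) {x : ι → ℝ} {c : ℝ}
    (hx : ∀ j, c ≤ x j) (i : ι) : c ≤ w.foldl (fun v a => M a *ᵥ v) x i := by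
  induction w generalizing x with
  | nil => exact hx i
  | cons a w ih => exact ih (le_mulVec_of_mem_rowStochastic (hM a) hx)

lemma sum_foldl_mulVec_of_mem_doublyStochastic {M : α → Matrix ι ι ℝ}
    (hM : ∀ a, M a ∈ doublyStochastic ℝ ι) (w : List α) (x : ι → ℝ) :
    ∑ i, w.foldl (fun v a => M a *ᵥ v) x i = ∑ i, x i := by
  induction w generalizing x with
  | nil => rfl
  | cons a w ih => rw [List.foldl_cons, ih, sum_mulVec_of_mem_doublyStochastic (hM a)]

end Matrix

section BlockAverage

variable {ι : Type*} [DecidableEq ι]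

noncomputable def uniformVec (s : Finset ι) : ι → ℝ := fun j => if j ∈ s then (#s : ℝ)⁻¹ else 0

lemma uniformVec_singleton (i : ι) : uniformVec {i} = Pi.single i 1 := by
  ext j
  by_cases h : j = i <;> simp [uniformVec, h]

variable [Fintype ι]

lemma sum_uniformVec {s : Finset ι} (hs : s.Nonempty) : ∑ j, uniformVec s j = 1 := by
  simp only [uniformVec, sum_ite_mem, univ_inter, sum_const, nsmul_eq_mul]
  exact mul_inv_cancel₀ (by exact_mod_cast hs.card_pos.ne')

noncomputable def blockAvg (t : Finset ι) : Matrix ι ι ℝ := fun i j =>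
  if i ∈ t then (if j ∈ t then (#t : ℝ)⁻¹ else 0) else (if j ∈ t then 0 else (#tᶜ : ℝ)⁻¹)

lemma blockAvg_mulVec_apply (t : Finset ι) (x : ι → ℝ) (i : ι) :
    (blockAvg t *ᵥ x) i =
      if i ∈ t then (#t : ℝ)⁻¹ * ∑ j ∈ t, x j else (#tᶜ : ℝ)⁻¹ * ∑ j ∈ tᶜ, x j := by
  simp only [mulVec, dotProduct, blockAvg, mul_sum]
  split_ifs with hi
  · simp [ite_mul, sum_ite_mem]
  · rw [← sum_compl_add_sum t]
    simp +contextual only [ite_mul, zero_mul, ite_true, sum_const_zero, add_zero]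
    exact sum_congr rfl fun j hj => if_neg (mem_compl.1 hj)

lemma blockAvg_mem_doublyStochastic (t : Finset ι) : blockAvg t ∈ doublyStochastic ℝ ι := by
  have hrow : ∀ i, ∑ j, blockAvg t i j = 1 := fun i => by
    have h := blockAvg_mulVec_apply t 1 i
    simp only [mulVec, dotProduct, Pi.one_apply, mul_one, sum_const, nsmul_eq_mul] at h
    rw [h]
    split_ifs with hi
    · exact inv_mul_cancel₀ (by exact_mod_cast (card_pos.2 ⟨i, hi⟩).ne')
    · exact inv_mul_cancel₀ (by exact_mod_cast (card_pos.2 ⟨i, mem_compl.2 hi⟩).ne')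
  have hsymm : ∀ i j, blockAvg t i j = blockAvg t j i := fun i j => by
    unfold blockAvg; split_ifs <;> simp_all
  refine mem_doublyStochastic_iff_sum.2 ⟨fun i j => ?_, hrow, fun j => ?_⟩
  · unfold blockAvg; split_ifs <;> positivity
  · simpa only [hsymm _ j] using hrow j

lemma blockAvg_mulVec_uniformVec_apply (s t : Finset ι) (i : ι) :
    (blockAvg t *ᵥ uniformVec s) i =
      if i ∈ t then (#(t ∩ s) : ℝ) / (#t * #s) else (#(tᶜ ∩ s) : ℝ) / (#tᶜ * #s) := by
  simp only [blockAvg_mulVec_apply, uniformVec, sum_ite_mem, sum_const, nsmul_eq_mul]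
  split_ifs <;> field_simp

lemma blockAvg_mulVec_uniformVec_of_subset {s t : Finset ι} (hs : s.Nonempty) (hst : s ⊆ t) :
    blockAvg t *ᵥ uniformVec s = uniformVec t := by
  ext i
  have hcompl : tᶜ ∩ s = ∅ := disjoint_iff_inter_eq_empty.1 (disjoint_compl_left.mono_right hst)
  rw [blockAvg_mulVec_uniformVec_apply, inter_eq_right.2 hst, hcompl, uniformVec]
  have : (#s : ℝ) ≠ 0 := by exact_mod_cast hs.card_pos.ne'
  split_ifs
  · field_simp
  · simp

lemma blockAvg_mulVec_uniformVec_of_superset {s t : Finset ι} (ht : t.Nonempty) (hts : t ⊆ s)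
    (i : ι) : (blockAvg t *ᵥ uniformVec s) i =
      if i ∈ t then (#s : ℝ)⁻¹ else (#(s \ t) : ℝ) / (#tᶜ * #s) := by
  rw [blockAvg_mulVec_uniformVec_apply, inter_eq_left.2 hts, inter_comm, ← sdiff_eq_inter_compl]
  have : (#t : ℝ) ≠ 0 := by exact_mod_cast ht.card_pos.ne'
  split_ifs <;> field_simp

end BlockAverage

lemma succ_mul_sub_le_mul_sub (a b n : ℕ) (hba : b < a) (ha : a < n) :
    (a + 1) * (n - b) ≤ (n ^ 2 / 4 + n + 1) * (a - b) := by
  have hamgm : (a + 1) * (n - a + 1) ≤ n ^ 2 / 4 + n + 1 := by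
    have h := four_mul_le_sq_add (a + 1) (n - a + 1)
    rw [show a + 1 + (n - a + 1) = n + 2 by omega, mul_assoc, mul_comm] at h
    calc (a + 1) * (n - a + 1) ≤ (n + 2) ^ 2 / 4 := (Nat.le_div_iff_mul_le four_pos).2 h
      _ = n ^ 2 / 4 + n + 1 := by
        rw [show (n + 2) ^ 2 = n ^ 2 + (n + 1) * 4 by ring, Nat.add_mul_div_right _ _ four_pos,
          add_assoc]
  have hle : a + 1 ≤ n ^ 2 / 4 + n + 1 := by omega
  calc (a + 1) * (n - b) = (a + 1) * (n - a + 1) + (a + 1) * (a - b - 1) := by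
        rw [← mul_add]; congr 1; omega
    _ ≤ (n ^ 2 / 4 + n + 1) + (n ^ 2 / 4 + n + 1) * (a - b - 1) := by gcongr
    _ = (n ^ 2 / 4 + n + 1) * (a - b) := by
        rw [add_comm, ← Nat.mul_succ]; congr 1; omega

lemma doublyStochastic_of_mem {m : ℕ} {A : Matrix (Fin m) (Fin m) ℝ}
    (h : A ∈ doublyStochastic ℝ (Fin m)) : DoublyStochastic A :=
  mem_doublyStochastic_iff_sum.1 h

noncomputable def sortedPRAC (n : ℕ) : PRAC (Fin n) where
  n := n + 1
  q0 := 0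
  F := {Fin.last n}ᶜ
  V a := blockAvg (Iic a.castSucc)
  Vhash := 1
  Vdollar := 1
  ds _ := doublyStochastic_of_mem (blockAvg_mem_doublyStochastic _)
  ds_hash := doublyStochastic_of_mem (one_mem _)
  ds_dollar := doublyStochastic_of_mem (one_mem _)

section SortedPRAC

variable {n : ℕ}

lemma sortedPRAC_accProb (w : List (Fin n)) :
    (sortedPRAC n).accProb w =
      1 - w.foldl (fun v a => blockAvg (Iic a.castSucc) *ᵥ v) (uniformVec {0}) (Fin.last n) := by
  have hmass := sum_foldl_mulVec_of_mem_doublyStochastic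
    (fun a : Fin n => blockAvg_mem_doublyStochastic (Iic a.castSucc)) w (uniformVec {0})
  rw [sum_uniformVec (singleton_nonempty _), ← sum_compl_add_sum {Fin.last n}, sum_singleton]
    at hmass
  change ∑ q ∈ {Fin.last n}ᶜ, (1 *ᵥ w.foldl (fun v a => blockAvg (Iic a.castSucc) *ᵥ v)
    (1 *ᵥ Pi.single 0 1)) q = _
  rw [one_mulVec, one_mulVec, ← uniformVec_singleton]
  linarith

lemma foldl_uniformVec_last_eq_zero_of_isChain {w : List (Fin n)} (hw : w.IsChain (· ≤ ·))
    {s : Finset (Fin (n + 1))} (hs : s.Nonempty) (hlast : Fin.last n ∉ s)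
    (hsw : ∀ a ∈ w.head?, s ⊆ Iic a.castSucc) :
    w.foldl (fun v a => blockAvg (Iic a.castSucc) *ᵥ v) (uniformVec s) (Fin.last n) = 0 := by
  induction w generalizing s with
  | nil => simp [uniformVec, hlast]
  | cons a w ih =>
    rw [List.isChain_cons] at hw
    rw [List.foldl_cons, blockAvg_mulVec_uniformVec_of_subset hs (hsw a rfl)]
    refine ih hw.2 nonempty_Iic (by simp) fun b hb => ?_
    exact Iic_subset_Iic.2 (Fin.castSucc_le_castSucc_iff.2 (hw.1 b hb))

lemma inv_le_blockAvg_mulVec_uniformVec {a b : Fin n} (hba : b < a) (i : Fin (n + 1)) :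
    ((n ^ 2 / 4 + n + 1 : ℕ) : ℝ)⁻¹ ≤
      (blockAvg (Iic b.castSucc) *ᵥ uniformVec (Iic a.castSucc)) i := by
  have hsub : Iic b.castSucc ⊆ Iic a.castSucc :=
    Iic_subset_Iic.2 (Fin.castSucc_le_castSucc_iff.2 hba.le)
  have hM : (0 : ℝ) < (n ^ 2 / 4 + n + 1 : ℕ) := by positivity
  rw [blockAvg_mulVec_uniformVec_of_superset nonempty_Iic hsub]
  split_ifs
  · rw [Fin.card_Iic, Fin.val_castSucc]
    exact inv_anti₀ (by positivity)
      (by exact_mod_cast (show (a : ℕ) + 1 ≤ n ^ 2 / 4 + n + 1 by omega))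
  · rw [card_sdiff_of_subset hsub, card_compl, Fin.card_Iic, Fin.card_Iic, Fintype.card_fin,
      Fin.val_castSucc, Fin.val_castSucc, Nat.add_sub_add_right, Nat.add_sub_add_right,
      le_div_iff₀ (mul_pos (by exact_mod_cast Nat.sub_pos_of_lt b.isLt) (by positivity)),
      inv_mul_le_iff₀ hM, mul_comm]
    exact_mod_cast succ_mul_sub_le_mul_sub a b n hba a.isLt

lemma inv_le_foldl_uniformVec_of_not_isChain {a : Fin n} {w : List (Fin n)}
    (hw : ¬ (a :: w).IsChain (· ≤ ·)) (i : Fin (n + 1)) :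
    ((n ^ 2 / 4 + n + 1 : ℕ) : ℝ)⁻¹ ≤
      w.foldl (fun v a => blockAvg (Iic a.castSucc) *ᵥ v) (uniformVec (Iic a.castSucc)) i := by
  induction w generalizing a with
  | nil => exact absurd (List.isChain_singleton a) hw
  | cons b w ih =>
    rw [List.foldl_cons]
    by_cases hab : a ≤ b
    · rw [blockAvg_mulVec_uniformVec_of_subset nonempty_Iic
        (Iic_subset_Iic.2 (Fin.castSucc_le_castSucc_iff.2 hab))]
      exact ih fun h => hw (List.isChain_cons_cons.2 ⟨hab, h⟩)
    · exact le_foldl_mulVec_of_mem_rowStochastic (M := fun c : Fin n => blockAvg (Iic c.castSucc))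
        (fun c => (mem_doublyStochastic_iff_mem_rowStochastic_and_mem_colStochastic.1
          (blockAvg_mem_doublyStochastic _)).1) w
        (inv_le_blockAvg_mulVec_uniformVec (not_le.1 hab)) i

end SortedPRAC

/-- For every `n ≥ 1`, the language `Lₙ = a₁*a₂*…aₙ*` (the sorted lists over `Fin n`) is
recognized by a PRA-C with `n+1` states with interval
`(1 - 1/(⌊n²/4⌋ + n + 1), 1)`. -/
theorem prac_recognizes_sorted (n : ℕ) (hn : 1 ≤ n) :
    ∃ A : PRAC (Fin n), A.n = n + 1 ∧
      A.Recognizes {w : List (Fin n) | w.Pairwise (· ≤ ·)}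
        (1 - 1 / ((n ^ 2 / 4 + n + 1 : ℕ) : ℝ)) 1 := by
  have hM : (1 : ℝ) ≤ (n ^ 2 / 4 + n + 1 : ℕ) := by exact_mod_cast Nat.le_add_left 1 _
  refine ⟨sortedPRAC n, rfl, sub_nonneg.2 ((one_div _).trans_le (inv_le_one_of_one_le₀ hM)),
    sub_lt_self 1 (by positivity), le_rfl, fun w hw => ?_, fun w hw => ?_⟩
  · have hlast : Fin.last n ∉ ({0} : Finset (Fin (n + 1))) := by
      simpa [Fin.ext_iff] using Nat.one_le_iff_ne_zero.1 hn
    rw [sortedPRAC_accProb, foldl_uniformVec_last_eq_zero_of_isChain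
      (List.isChain_iff_pairwise.2 hw) (singleton_nonempty 0) hlast (by simp), sub_zero]
  · cases w with
    | nil => exact absurd List.Pairwise.nil hw
    | cons a w =>
      have hbound := inv_le_foldl_uniformVec_of_not_isChain
        (fun h => hw (List.isChain_iff_pairwise.1 h)) (Fin.last n)
      rw [sortedPRAC_accProb, List.foldl_cons,
        blockAvg_mulVec_uniformVec_of_subset (singleton_nonempty 0) (by simp), one_div]
      linarith
end

section
/- Let D be a DFA with finite state set Q over alphabet Σ, and write q·w for evalFrom(q,w). Then the following are equivalent: (i) [type (*)] there exist states q, q₁, q₂ with q₁ ≠ q₂ and words x, y such that q·x = q₁, q·y = q₂, q₁·x = q₁, q₂·y = q₂, for every word t that is a concatenation of copies of x and y there exists such a word t₁ with q₁·t·t₁ = q₁, and for every such word t there exists such a word t₂ with q₂·t·t₂ = q₂; (ii) either [type (*′)] there exist states q, q₁, q₂ with q₁ ≠ q₂ and words x, y such that q·x = q₁, q·y = q₂, q₁·x = q₁, q₁·y = q₁, q₂·x = q₂, q₂·y = q₂, or [type (*″)] there exist states q₁ ≠ q₂ and words x, y such that q₁·x = q₂, q₂·x = q₂, and q₂·y =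 q₁; moreover in the implication from (i) to (ii) the witnessing states q₁ (and q, q₂ in the type-(*′) case) can be taken among the states of the type-(*) configuration and the witnessing words can be taken to be concatenations of copies of x and y. -/
/-!
Replace `x` and `y` by powers `X = xⁿ`, `Y = yᵐ` whose actions on the finite state set are
idempotent; these still fix `q₁`, resp. `q₂`, and send `q` to them. If `Y` fixes `q₁` and `X`
fixes `q₂`, this is a configuration of type `(*')`. Otherwise, say `q₁·Y = p ≠ q₁`: then `p·Y = p`
by idempotence, and the return word `t₁` with `q₁·Y·t₁ = q₁` gives `p·t₁ = q₁`, a configuration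
of type `(*'')`. Conversely, a `(*')` configuration is of type `(*)` with empty return words, and
in a `(*'')` configuration the words `x` and `x ++ y` act on `{q₁, q₂}` as the constants `q₂` and
`q₁`, so `q₂, q₁` with these words form a configuration of type `(*)`.
-/

/-- `t` is a concatenation of copies of the words `x` and `y` (possibly empty). -/
def InStarXY {α : Type} (x y t : List α) : Prop :=
  ∃ l : List Bool, t = (l.map (fun b => if b then x else y)).flatten

/-- A DFA configuration of type `(*)`. -/
def TypeStar {α σ : Type} (D : DFA α σ) : Prop :=
  ∃ (q q1 q2 : σ) (x y : List α), q1 ≠ q2 ∧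
    D.evalFrom q x = q1 ∧ D.evalFrom q y = q2 ∧
    D.evalFrom q1 x = q1 ∧ D.evalFrom q2 y = q2 ∧
    (∀ t, InStarXY x y t → ∃ t1, InStarXY x y t1 ∧ D.evalFrom q1 (t ++ t1) = q1) ∧
    (∀ t, InStarXY x y t → ∃ t2, InStarXY x y t2 ∧ D.evalFrom q2 (t ++ t2) = q2)

/-- A DFA configuration of type `(*')`. -/
def TypeStar' {α σ : Type} (D : DFA α σ) : Prop :=
  ∃ (q q1 q2 : σ) (x y : List α), q1 ≠ q2 ∧
    D.evalFrom q x = q1 ∧ D.evalFrom q y = q2 ∧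
    D.evalFrom q1 x = q1 ∧ D.evalFrom q1 y = q1 ∧
    D.evalFrom q2 x = q2 ∧ D.evalFrom q2 y = q2

/-- A DFA configuration of type `(*'')`. -/
def TypeStar'' {α σ : Type} (D : DFA α σ) : Prop :=
  ∃ (q1 q2 : σ) (x y : List α), q1 ≠ q2 ∧
    D.evalFrom q1 x = q2 ∧ D.evalFrom q2 x = q2 ∧ D.evalFrom q2 y = q1

theorem exists_pow_isIdempotentElem {M : Type*} [Monoid M] [Finite M] (a : M) :
    ∃ n ≠ 0, IsIdempotentElem (a ^ n) := by
  obtain ⟨i, j, hne, hij⟩ := Finite.exists_ne_map_eq_of_infinite (a ^ · : ℕ → M)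
  wlog hlt : i < j generalizing i j
  · exact this j i hne.symm hij.symm (by omega)
  obtain ⟨d, hd, rfl⟩ : ∃ d, 0 < d ∧ j = i + d := ⟨j - i, by omega, by omega⟩
  have period : ∀ m, i ≤ m → a ^ (m + d) = a ^ m := fun m hm => by
    obtain ⟨k, rfl⟩ := Nat.exists_eq_add_of_le hm
    rw [add_right_comm, pow_add, ← hij, ← pow_add]
  have periods : ∀ k m, i ≤ m → a ^ (m + k * d) = a ^ m := fun k => by
    induction k with
    | zero => simp
    | succ k ih =>
      intro m hm
      rw [add_mul, one_mul, ← add_assoc, period _ (by omega), ih m hm]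
  have hn : i ≤ (i + 1) * d := le_trans (Nat.le_succ i) (Nat.le_mul_of_pos_right _ hd)
  exact ⟨(i + 1) * d, by positivity, by rw [IsIdempotentElem, ← pow_add, periods _ _ hn]⟩

namespace InStarXY

variable {α : Type} (x y : List α)

theorem nil : InStarXY x y [] := ⟨[], rfl⟩

theorem left : InStarXY x y x := ⟨[true], by simp⟩

theorem right : InStarXY x y y := ⟨[false], by simp⟩

theorem replicate_left (n : ℕ) : InStarXY x y (List.replicate n x).flatten :=
  ⟨List.replicate n true, by simp⟩

theorem replicate_right (n : ℕ) : InStarXY x y (List.replicate n y).flatten :=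
  ⟨List.replicate n false, by simp⟩

end InStarXY

namespace DFA

variable {α σ : Type} (D : DFA α σ)

theorem evalFrom_flatten_replicate (s : σ) (x : List α) (n : ℕ) :
    D.evalFrom s (List.replicate n x).flatten = (D.evalFrom · x)^[n] s := by
  induction n generalizing s with
  | zero => rfl
  | succ n ih =>
    rw [List.replicate_succ, List.flatten_cons, evalFrom_of_append, ih,
      Function.iterate_succ_apply]

theorem evalFrom_flatten_replicate_of_fixed {q p : σ} {x : List α} (hq : D.evalFrom q x = p)
    (hp : D.evalFrom p x = p) {n : ℕ} (hn : n ≠ 0) :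
    D.evalFrom q (List.replicate n x).flatten = p := by
  obtain ⟨k, rfl⟩ := Nat.exists_eq_succ_of_ne_zero hn
  rw [evalFrom_flatten_replicate, Function.iterate_succ_apply, hq, Function.iterate_fixed hp]

theorem exists_flatten_replicate_idempotent [Finite σ] (x : List α) :
    ∃ n ≠ 0, ∀ s, D.evalFrom (D.evalFrom s (List.replicate n x).flatten)
      (List.replicate n x).flatten = D.evalFrom s (List.replicate n x).flatten := by
  have : Finite (Function.End σ) := inferInstanceAs (Finite (σ → σ))
  obtain ⟨n, hn, hidem⟩ := exists_pow_isIdempotentElem (M := Function.End σ) (D.evalFrom · x)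
  refine ⟨n, hn, fun s => ?_⟩
  simp only [evalFrom_flatten_replicate]
  exact congrFun hidem s

theorem mapsTo_evalFrom_of_inStarXY {S : Set σ} {x y t : List α}
    (hx : Set.MapsTo (D.evalFrom · x) S S) (hy : Set.MapsTo (D.evalFrom · y) S S)
    (ht : InStarXY x y t) : Set.MapsTo (D.evalFrom · t) S S := by
  obtain ⟨l, rfl⟩ := ht
  induction l with
  | nil => exact fun _ hs => hs
  | cons b l ih =>
    intro s hs
    simp only [List.map_cons, List.flatten_cons, evalFrom_of_append]
    exact ih (by cases b; exacts [hy hs, hx hs])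

theorem evalFrom_eq_self_of_inStarXY {p : σ} {x y t : List α} (hx : D.evalFrom p x = p)
    (hy : D.evalFrom p y = p) (ht : InStarXY x y t) : D.evalFrom p t = p :=
  D.mapsTo_evalFrom_of_inStarXY (S := {p}) (by simpa) (by simpa) ht rfl

end DFA

section

variable {α σ : Type} {D : DFA α σ}

theorem TypeStar'.typeStar (h : TypeStar' D) : TypeStar D := by
  obtain ⟨q, q1, q2, x, y, hne, hqx, hqy, h1x, h1y, h2x, h2y⟩ := h
  refine ⟨q, q1, q2, x, y, hne, hqx, hqy, h1x, h2y, fun t ht => ⟨[], .nil x y, ?_⟩,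
    fun t ht => ⟨[], .nil x y, ?_⟩⟩
  · rw [List.append_nil, D.evalFrom_eq_self_of_inStarXY h1x h1y ht]
  · rw [List.append_nil, D.evalFrom_eq_self_of_inStarXY h2x h2y ht]

theorem TypeStar''.typeStar (h : TypeStar'' D) : TypeStar D := by
  obtain ⟨q1, q2, x, y, hne, h1x, h2x, h2y⟩ := h
  have hx : ∀ p ∈ ({q1, q2} : Set σ), D.evalFrom p x = q2 := by
    rintro p (rfl | rfl) <;> assumption
  have hxy : ∀ p ∈ ({q1, q2} : Set σ), D.evalFrom p (x ++ y) = q1 := fun p hp => by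
    rw [DFA.evalFrom_of_append, hx p hp, h2y]
  have hstay : ∀ t, InStarXY x (x ++ y) t →
      Set.MapsTo (D.evalFrom · t) ({q1, q2} : Set σ) {q1, q2} := fun t ht =>
    D.mapsTo_evalFrom_of_inStarXY (fun p hp => by simp [hx p hp])
      (fun p hp => by simp [hxy p hp]) ht
  refine ⟨q2, q2, q1, x, x ++ y, hne.symm, h2x, hxy q2 (by simp), h2x, hxy q1 (by simp),
    fun t ht => ⟨x, .left _ _, ?_⟩, fun t ht => ⟨x ++ y, .right _ _, ?_⟩⟩
  · rw [DFA.evalFrom_of_append, hx _ (hstay t ht (by simp))]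
  · rw [DFA.evalFrom_of_append, hxy _ (hstay t ht (by simp))]

variable [Finite σ] (D)

theorem typeStar'_or_typeStar''_of_typeStar_config (q q1 q2 : σ) (x y : List α)
    (hqx : D.evalFrom q x = q1) (hqy : D.evalFrom q y = q2)
    (h1x : D.evalFrom q1 x = q1) (h2y : D.evalFrom q2 y = q2)
    (h1 : ∀ t, InStarXY x y t → ∃ t1, InStarXY x y t1 ∧ D.evalFrom q1 (t ++ t1) = q1)
    (h2 : ∀ t, InStarXY x y t → ∃ t2, InStarXY x y t2 ∧ D.evalFrom q2 (t ++ t2) = q2) :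
    (∃ x' y' : List α, InStarXY x y x' ∧ InStarXY x y y' ∧
        D.evalFrom q x' = q1 ∧ D.evalFrom q y' = q2 ∧
        D.evalFrom q1 x' = q1 ∧ D.evalFrom q1 y' = q1 ∧
        D.evalFrom q2 x' = q2 ∧ D.evalFrom q2 y' = q2) ∨
      (∃ p1 : σ, (p1 = q ∨ p1 = q1 ∨ p1 = q2) ∧ ∃ (p2 : σ) (x' y' : List α),
        InStarXY x y x' ∧ InStarXY x y y' ∧ p1 ≠ p2 ∧
        D.evalFrom p1 x' = p2 ∧ D.evalFrom p2 x' = p2 ∧ D.evalFrom p2 y' = p1) := by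
  obtain ⟨n, hn, hX⟩ := D.exists_flatten_replicate_idempotent x
  obtain ⟨m, hm, hY⟩ := D.exists_flatten_replicate_idempotent y
  have hXstar := InStarXY.replicate_left x y n
  have hYstar := InStarXY.replicate_right x y m
  set X := (List.replicate n x).flatten
  set Y := (List.replicate m y).flatten
  by_cases hq1 : D.evalFrom q1 Y = q1
  · by_cases hq2 : D.evalFrom q2 X = q2
    · exact Or.inl ⟨X, Y, hXstar, hYstar, D.evalFrom_flatten_replicate_of_fixed hqx h1x hn,
        D.evalFrom_flatten_replicate_of_fixed hqy h2y hm,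
        D.evalFrom_flatten_replicate_of_fixed h1x h1x hn, hq1, hq2,
        D.evalFrom_flatten_replicate_of_fixed h2y h2y hm⟩
    · obtain ⟨t2, ht2, hret⟩ := h2 X hXstar
      rw [DFA.evalFrom_of_append] at hret
      exact Or.inr ⟨q2, by simp, _, X, t2, hXstar, ht2, Ne.symm hq2, rfl, hX q2, hret⟩
  · obtain ⟨t1, ht1, hret⟩ := h1 Y hYstar
    rw [DFA.evalFrom_of_append] at hret
    exact Or.inr ⟨q1, by simp, _, Y, t1, hYstar, ht1, Ne.symm hq1, rfl, hY q1, hret⟩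

end

/-- A regular language is of type `(*)` iff it is of type `(*')` or of type `(*'')`;
moreover in the forward direction the witnessing states may be taken among the states of
the type-`(*)` configuration and the witnessing words may be taken to be concatenations of
copies of `x` and `y`. -/
theorem typeStar_iff_typeStar'_or_typeStar'' {α σ : Type} [Fintype σ] (D : DFA α σ) :
    (TypeStar D ↔ TypeStar' D ∨ TypeStar'' D) ∧
    (∀ (q q1 q2 : σ) (x y : List α), q1 ≠ q2 →
      D.evalFrom q x = q1 → D.evalFrom q y = q2 →
      D.evalFrom q1 x = q1 → D.evalFrom q2 y = q2 →
      (∀ t, InStarXY x y t → ∃ t1, InStarXY x y t1 ∧ D.evalFrom q1 (t ++ t1) = q1) →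
      (∀ t, InStarXY x y t → ∃ t2, InStarXY x y t2 ∧ D.evalFrom q2 (t ++ t2) = q2) →
      ((∃ x' y' : List α, InStarXY x y x' ∧ InStarXY x y y' ∧
          D.evalFrom q x' = q1 ∧ D.evalFrom q y' = q2 ∧
          D.evalFrom q1 x' = q1 ∧ D.evalFrom q1 y' = q1 ∧
          D.evalFrom q2 x' = q2 ∧ D.evalFrom q2 y' = q2) ∨
        (∃ p1 : σ, (p1 = q ∨ p1 = q1 ∨ p1 = q2) ∧ ∃ (p2 : σ) (x' y' : List α),
          InStarXY x y x' ∧ InStarXY x y y' ∧ p1 ≠ p2 ∧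
          D.evalFrom p1 x' = p2 ∧ D.evalFrom p2 x' = p2 ∧ D.evalFrom p2 y' = p1))) := by
  refine ⟨⟨?_, fun h => h.elim TypeStar'.typeStar TypeStar''.typeStar⟩,
    fun q q1 q2 x y _ => typeStar'_or_typeStar''_of_typeStar_config D q q1 q2 x y⟩
  rintro ⟨q, q1, q2, x, y, hne, hqx, hqy, h1x, h2y, h1, h2⟩
  rcases typeStar'_or_typeStar''_of_typeStar_config D q q1 q2 x y hqx hqy h1x h2y h1 h2 with
    ⟨x', y', -, -, h⟩ | ⟨p1, -, p2, x', y', -, -, h⟩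
  · exact Or.inl ⟨q, q1, q2, x', y', hne, h⟩
  · exact Or.inr ⟨p1, p2, x', y', h⟩
end

section
/- Let A be an n×n doubly stochastic real matrix. Then for every index i there exists an integer k ≥ 1 such that (A^k)_{i,i} > 0. -/
/-! By Birkhoff's theorem a doubly stochastic matrix `A` is a convex combination of permutation
matrices, so some permutation `σ` has `A j (σ j) > 0` for every `j`. Following `σ` then gives
`(Aᵏ) i (σᵏ i) > 0` for all `k`, and `k = orderOf σ` returns to `i`. -/

open Finset Matrix

section

variable {R ι : Type*} [Fintype ι] [DecidableEq ι]

theorem Matrix.pow_apply_perm_pow_pos [Semiring R] [PartialOrder R] [IsStrictOrderedRing R]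
    {M : Matrix ι ι R} (hM : ∀ i j, 0 ≤ M i j) {σ : Equiv.Perm ι} (hσ : ∀ j, 0 < M j (σ j))
    (k : ℕ) (i : ι) : 0 < (M ^ k) i ((σ ^ k) i) := by
  induction k with
  | zero => simp
  | succ k ih =>
    set j := (σ ^ k) i
    calc 0 < (M ^ k) i j * M j (σ j) := mul_pos ih (hσ j)
      _ ≤ ∑ l, (M ^ k) i l * M l (σ j) :=
        single_le_sum (f := fun l => (M ^ k) i l * M l (σ j))
          (fun l _ => mul_nonneg (pow_apply_nonneg hM k i l) (hM l (σ j))) (mem_univ j)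
      _ = (M ^ (k + 1)) i ((σ ^ (k + 1)) i) := by
        rw [pow_succ M, mul_apply, pow_succ' σ, Equiv.Perm.mul_apply]

theorem exists_perm_apply_pos_of_mem_doublyStochastic [Field R] [LinearOrder R]
    [IsStrictOrderedRing R] {M : Matrix ι ι R} (hM : M ∈ doublyStochastic R ι) :
    ∃ σ : Equiv.Perm ι, ∀ i, 0 < M i (σ i) := by
  obtain ⟨w, hw_nonneg, hw_sum, hMw⟩ := exists_eq_sum_perm_of_mem_doublyStochastic hM
  obtain ⟨σ, hσ⟩ : ∃ σ, 0 < w σ := by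
    by_contra! h
    have : ∑ σ, w σ ≤ 0 := sum_nonpos fun σ _ => h σ
    linarith
  refine ⟨σ, fun i => ?_⟩
  rw [← hMw, Matrix.sum_apply]
  calc 0 < w σ := hσ
    _ = (w σ • σ.permMatrix R) i (σ i) := by simp [Equiv.toPEquiv_apply]
    _ ≤ ∑ τ, (w τ • τ.permMatrix R) i (σ i) :=
      single_le_sum (f := fun τ => (w τ • τ.permMatrix R) i (σ i))
        (fun τ _ => smul_nonneg (hw_nonneg τ)
          (nonneg_of_mem_doublyStochastic permMatrix_mem_doublyStochastic)) (mem_univ σ)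

end

/-- In a doubly stochastic Markov chain every state is accessible from itself: for every
index `i` there is `k ≥ 1` with `(Aᵏ)ᵢᵢ > 0`. -/
theorem doublyStochastic_exists_pow_diag_pos (n : ℕ) (A : Matrix (Fin n) (Fin n) ℝ)
    (hA : DoublyStochastic A) (i : Fin n) :
    ∃ k : ℕ, 1 ≤ k ∧ 0 < (A ^ k) i i := by
  have hA' : A ∈ doublyStochastic ℝ (Fin n) := mem_doublyStochastic_iff_sum.2 hA
  obtain ⟨σ, hσ⟩ := exists_perm_apply_pos_of_mem_doublyStochastic hA'
  refine ⟨orderOf σ, orderOf_pos σ, ?_⟩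
  simpa [pow_orderOf_eq_one] using
    pow_apply_perm_pow_pos (M := A) (fun _ _ => nonneg_of_mem_doublyStochastic hA') hσ
      (orderOf σ) i
end

section
/- Let A be an n×n doubly stochastic real matrix and let a, b be indices with A_{b,a} > 0. Then there exists an integer m ≥ 1 such that (A^m)_{a,b} > 0. -/
open Finset Relation

namespace Matrix

variable {ι R : Type*} [Fintype ι]

theorem sum_sum_compl_eq_sum_compl_sum [DecidableEq ι] [AddCancelCommMonoid R]
    {M : Matrix ι ι R} {c : R} (hrow : ∀ i, ∑ j, M i j = c) (hcol : ∀ j, ∑ i, M i j = c)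
    (S : Finset ι) : ∑ i ∈ S, ∑ j ∈ Sᶜ, M i j = ∑ i ∈ Sᶜ, ∑ j ∈ S, M i j := by
  have hrows_eq_cols : ∑ i ∈ S, ∑ j, M i j = ∑ j ∈ S, ∑ i, M i j := by simp only [hrow, hcol]
  simp only [← sum_add_sum_compl S, sum_add_distrib] at hrows_eq_cols
  rw [sum_comm (s := S) (t := S), sum_comm (s := S) (t := Sᶜ)] at hrows_eq_cols
  exact add_left_cancel hrows_eq_cols

theorem apply_eq_zero_of_notMem_of_mem [Ring R] [PartialOrder R] [IsOrderedRing R]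
    [DecidableEq ι] {M : Matrix ι ι R} (hM : M ∈ doublyStochastic R ι) {S : Finset ι}
    (hS : ∀ i ∈ S, ∀ j ∉ S, M i j = 0) {i j : ι} (hi : i ∉ S) (hj : j ∈ S) : M i j = 0 := by
  have hflow := sum_sum_compl_eq_sum_compl_sum (sum_row_of_mem_doublyStochastic hM)
    (sum_col_of_mem_doublyStochastic hM) S
  have hout : ∑ i ∈ S, ∑ j ∈ Sᶜ, M i j = 0 :=
    sum_eq_zero fun i hi => sum_eq_zero fun j hj => hS i hi j (mem_compl.1 hj)
  have hnonneg : ∀ i j, 0 ≤ M i j := fun _ _ => nonneg_of_mem_doublyStochastic hM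
  rw [hout, eq_comm,
    sum_eq_zero_iff_of_nonneg fun i _ => sum_nonneg fun j _ => hnonneg i j] at hflow
  exact (sum_eq_zero_iff_of_nonneg fun j _ => hnonneg i j).1 (hflow i (mem_compl.2 hi)) j hj

theorem transGen_of_mem_doublyStochastic [Ring R] [PartialOrder R] [IsOrderedRing R]
    [DecidableEq ι] {M : Matrix ι ι R} (hM : M ∈ doublyStochastic R ι) {a b : ι}
    (hba : 0 < M b a) : TransGen (fun i j => 0 < M i j) a b := by
  classical
  let S : Finset ι := univ.filter (ReflTransGen (fun i j => 0 < M i j) a)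
  have hS : ∀ i ∈ S, ∀ j ∉ S, M i j = 0 := by
    intro i hi j hj
    by_contra hij
    have hpos : 0 < M i j := (nonneg_of_mem_doublyStochastic hM).lt_of_ne' hij
    exact hj (mem_filter.2 ⟨mem_univ j, (mem_filter.1 hi).2.tail hpos⟩)
  have hbS : b ∈ S := by
    by_contra hb
    exact hba.ne' (apply_eq_zero_of_notMem_of_mem hM hS hb
      (mem_filter.2 ⟨mem_univ a, ReflTransGen.refl⟩))
  rcases reflTransGen_iff_eq_or_transGen.1 (mem_filter.1 hbS).2 with rfl | hab
  · exact TransGen.single hba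
  · exact hab

theorem exists_pow_apply_pos_of_transGen [DecidableEq ι] [Semiring R] [PartialOrder R]
    [IsStrictOrderedRing R] {M : Matrix ι ι R} (hM : ∀ i j, 0 ≤ M i j) {a b : ι}
    (hab : TransGen (fun i j => 0 < M i j) a b) : ∃ m, 1 ≤ m ∧ 0 < (M ^ m) a b := by
  induction hab with
  | single h => exact ⟨1, le_rfl, by rwa [pow_one]⟩
  | @tail j k _ hjk ih =>
    obtain ⟨m, -, hpos⟩ := ih
    refine ⟨m + 1, by omega, ?_⟩
    rw [pow_succ, mul_apply]
    exact sum_pos' (fun l _ => mul_nonneg (pow_apply_nonneg hM m a l) (hM l k))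
      ⟨j, mem_univ j, mul_pos hpos hjk⟩

end Matrix

/-- In a doubly stochastic Markov chain, if `q_b` is accessible from `q_a` in one step then
`q_a` is accessible from `q_b`. -/
theorem doublyStochastic_one_step_back (n : ℕ) (A : Matrix (Fin n) (Fin n) ℝ)
    (hA : DoublyStochastic A) (a b : Fin n) (hab : 0 < A b a) :
    ∃ m : ℕ, 1 ≤ m ∧ 0 < (A ^ m) a b := by
  have hA' : A ∈ doublyStochastic ℝ (Fin n) := mem_doublyStochastic_iff_sum.2 hA
  exact Matrix.exists_pow_apply_pos_of_transGen (fun _ _ => nonneg_of_mem_doublyStochastic hA')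
    (Matrix.transGen_of_mem_doublyStochastic hA' hab)
end

section
/- Let A be an n×n doubly stochastic real matrix and let a, b be indices such that (A^k)_{b,a} > 0 for some integer k ≥ 1. Then there exists an integer m ≥ 1 such that (A^m)_{a,b} > 0 (accessibility in the associated doubly stochastic Markov chain is symmetric). -/
namespace Matrix

open Finset

variable {n R : Type*} [Fintype n] [Ring R] [LinearOrder R] [IsStrictOrderedRing R]
  {A : Matrix n n R}

theorem mul_apply_pos_iff {B : Matrix n n R} (hA : ∀ i j, 0 ≤ A i j) (hB : ∀ i j, 0 ≤ B i j)
    (i k : n) : 0 < (A * B) i k ↔ ∃ j, 0 < A i j ∧ 0 < B j k := by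
  rw [mul_apply, sum_pos_iff_of_nonneg fun j _ ↦ mul_nonneg (hA i j) (hB j k)]
  simp only [mem_univ, true_and]
  refine exists_congr fun j ↦ ⟨fun h ↦ ?_, fun ⟨h₁, h₂⟩ ↦ mul_pos h₁ h₂⟩
  exact ⟨(hA i j).lt_of_ne' (left_ne_zero_of_mul h.ne'),
    (hB j k).lt_of_ne' (right_ne_zero_of_mul h.ne')⟩

theorem sum_sum_compl_eq_sum_sum_compl [DecidableEq n] (hA : ∀ i, ∑ j, A i j = ∑ j, A j i)
    (S : Finset n) : ∑ i ∈ S, ∑ j ∈ Sᶜ, A i j = ∑ i ∈ S, ∑ j ∈ Sᶜ, A j i := by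
  have hS := sum_congr rfl fun i (_ : i ∈ S) ↦ hA i
  simp only [← sum_add_sum_compl S, sum_add_distrib] at hS
  rw [sum_comm (s := S) (t := S)] at hS
  exact add_left_cancel hS

def IsForwardClosed (A : Matrix n n R) (S : Set n) : Prop :=
  ∀ i ∈ S, ∀ j, 0 < A i j → j ∈ S

theorem IsForwardClosed.mem_of_pow_apply_pos [DecidableEq n] {S : Set n}
    (hS : IsForwardClosed A S) (hA : ∀ i j, 0 ≤ A i j) {m : ℕ} {i j : n}
    (hij : 0 < (A ^ m) i j) (hi : i ∈ S) : j ∈ S := by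
  induction m generalizing j with
  | zero =>
    obtain rfl : i = j := by by_contra h; simp [h] at hij
    exact hi
  | succ m ih =>
    rw [pow_succ, mul_apply_pos_iff (pow_apply_nonneg hA m) hA] at hij
    obtain ⟨l, hil, hlj⟩ := hij
    exact hS l (ih hil) j hlj

theorem IsForwardClosed.compl {S : Set n} (hS : IsForwardClosed A S) (hA : ∀ i j, 0 ≤ A i j)
    (hbal : ∀ i, ∑ j, A i j = ∑ j, A j i) : IsForwardClosed A Sᶜ := by
  classical
  set T : Finset n := {i | i ∈ S}
  have hout : ∑ i ∈ T, ∑ j ∈ Tᶜ, A i j = 0 :=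
    sum_eq_zero fun i hi ↦ sum_eq_zero fun j hj ↦ by
      by_contra h
      simp only [T, mem_compl, mem_filter_univ] at hi hj
      exact hj (hS i hi j ((hA i j).lt_of_ne' h))
  have hin := (sum_sum_compl_eq_sum_sum_compl hbal T).symm.trans hout
  rw [sum_eq_zero_iff_of_nonneg fun _ _ ↦ sum_nonneg fun _ _ ↦ hA _ _] at hin
  intro i hi j hij
  by_contra hj
  have hji := (sum_eq_zero_iff_of_nonneg fun _ _ ↦ hA _ _).1
    (hin j ((mem_filter_univ j).2 (Set.not_notMem.1 hj))) i (by simpa [T] using hi)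
  exact hij.ne' hji

theorem isForwardClosed_setOf_pow_apply_pos [DecidableEq n] (hA : ∀ i j, 0 ≤ A i j) (a : n) :
    IsForwardClosed A {j | ∃ m, 0 < (A ^ m) a j} := by
  rintro i ⟨m, hm⟩ j hij
  refine ⟨m + 1, ?_⟩
  rw [pow_succ, mul_apply_pos_iff (pow_apply_nonneg hA m) hA]
  exact ⟨i, hm, hij⟩

theorem exists_pow_apply_pos_of_pow_apply_pos [DecidableEq n] (hA : ∀ i j, 0 ≤ A i j)
    (hbal : ∀ i, ∑ j, A i j = ∑ j, A j i) {a b : n} {k : ℕ} (hk : 0 < k)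
    (hba : 0 < (A ^ k) b a) : ∃ m, 0 < m ∧ 0 < (A ^ m) a b := by
  have hb : b ∈ {j | ∃ m, 0 < (A ^ m) a j} := by
    by_contra hb
    exact ((isForwardClosed_setOf_pow_apply_pos hA a).compl hA hbal).mem_of_pow_apply_pos hA hba
      hb ⟨0, by simp⟩
  obtain ⟨m, hm⟩ := hb
  rcases m.eq_zero_or_pos with rfl | hm₀
  · obtain rfl : a = b := by by_contra h; simp [h] at hm
    exact ⟨k, hk, hba⟩
  · exact ⟨m, hm₀, hm⟩

end Matrix

/-- In a doubly stochastic Markov chain accessibility is symmetric: if `q_b` is accessible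
from `q_a` then `q_a` is accessible from `q_b`. -/
theorem doublyStochastic_accessible_symm (n : ℕ) (A : Matrix (Fin n) (Fin n) ℝ)
    (hA : DoublyStochastic A) (a b : Fin n) (hab : ∃ k : ℕ, 1 ≤ k ∧ 0 < (A ^ k) b a) :
    ∃ m : ℕ, 1 ≤ m ∧ 0 < (A ^ m) a b := by
  obtain ⟨hnonneg, hrow, hcol⟩ := hA
  obtain ⟨k, hk, hba⟩ := hab
  exact Matrix.exists_pow_apply_pos_of_pow_apply_pos hnonneg
    (fun i ↦ (hrow i).trans (hcol i).symm) hk hba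
end

section
/- Over the two-letter alphabet {a,b}, neither the language (a,b)*a of all nonempty words whose last letter is a, nor the language a(a,b)* of all nonempty words whose first letter is a, is recognized by any PRA-C with any interval. -/
/-!
A doubly stochastic matrix is a contraction for the Euclidean norm (Birkhoff), so along the
closure `K` of the set of vectors reachable from the initial one the norm can only decrease.
On the set `M` of points of `K` of minimal norm every letter therefore acts without losing
norm, and a contraction that preserves the norm of `x` satisfies `T† (T x) = x`: all letters
act isometrically on the compact set `M`. An isometry of a compact set into itself is
recurrent, so for `x = V_b z` with `z ∈ M` the points `V_a^(m+1) x`, which end in `a`, come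
back arbitrarily close to `x`, which ends in `b`; by continuity one acceptance probability is
then both `≥ p₂` and `≤ p₁`. For the first letter, pass to the adjoints, which read the word
backwards.
-/

open Set Matrix
open scoped RealInnerProductSpace

theorem Set.MapsTo.dist_iterate_eq {X : Type*} [PseudoMetricSpace X] {S : X → X} {K : Set X}
    (hSK : MapsTo S K K) (hS : ∀ x ∈ K, ∀ y ∈ K, dist (S x) (S y) = dist x y) (k : ℕ)
    {x y : X} (hx : x ∈ K) (hy : y ∈ K) : dist (S^[k] x) (S^[k] y) = dist x y := by
  induction k generalizing x y with
  | zero => rfl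
  | succ k ih =>
    rw [Function.iterate_succ_apply, Function.iterate_succ_apply, ih (hSK hx) (hSK hy),
      hS x hx y hy]

theorem IsCompact.mem_closure_range_iterate_succ {X : Type*} [PseudoMetricSpace X] {S : X → X}
    {K : Set X} (hK : IsCompact K) (hSK : MapsTo S K K)
    (hS : ∀ x ∈ K, ∀ y ∈ K, dist (S x) (S y) = dist x y) {x : X} (hx : x ∈ K) :
    x ∈ closure (range fun m => S^[m + 1] x) := by
  obtain ⟨_, -, ψ, hψ, hlim⟩ := hK.tendsto_subseq fun m => hSK.iterate m hx
  refine Metric.mem_closure_iff.2 fun ε hε => ?_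
  obtain ⟨N, hN⟩ := Metric.cauchySeq_iff'.1 (Filter.Tendsto.cauchySeq hlim) ε hε
  obtain ⟨d, hd⟩ : ∃ d, ψ (N + 1) = ψ N + (d + 1) :=
    Nat.exists_eq_add_of_lt (hψ N.lt_succ_self)
  refine ⟨_, ⟨d, rfl⟩, ?_⟩
  calc dist x (S^[d + 1] x)
      = dist (S^[ψ N] x) (S^[ψ N] (S^[d + 1] x)) :=
        (hSK.dist_iterate_eq hS _ hx (hSK.iterate _ hx)).symm
    _ = dist (S^[ψ (N + 1)] x) (S^[ψ N] x) := by
        rw [← Function.iterate_add_apply, ← hd, dist_comm]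
    _ < ε := hN _ N.le_succ

section Contraction

variable {E : Type*} [NormedAddCommGroup E] [InnerProductSpace ℝ E] [FiniteDimensional ℝ E]

theorem ContinuousLinearMap.adjoint_apply_apply_of_norm_apply_eq {T : E →L[ℝ] E}
    (hT : ‖T‖ ≤ 1) {x : E} (hx : ‖T x‖ = ‖x‖) : adjoint T (T x) = x := by
  have hinner : ⟪adjoint T (T x), x⟫ = ‖x‖ ^ 2 := by
    rw [adjoint_inner_left, real_inner_self_eq_norm_sq, hx]
  have hnorm : ‖adjoint T (T x)‖ ≤ ‖x‖ := by
    calc ‖adjoint T (T x)‖ ≤ ‖adjoint T‖ * ‖T x‖ := le_opNorm _ _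
      _ ≤ 1 * ‖x‖ := by
        rw [LinearIsometryEquiv.norm_map, hx]
        exact mul_le_mul_of_nonneg_right hT (norm_nonneg _)
      _ = ‖x‖ := one_mul _
  have hsq : ‖adjoint T (T x) - x‖ ^ 2 ≤ 0 := by
    rw [norm_sub_sq_real, hinner]
    nlinarith [norm_nonneg (adjoint T (T x)), norm_nonneg x]
  rw [← sub_eq_zero, ← norm_eq_zero, ← sq_eq_zero_iff]
  exact le_antisymm hsq (sq_nonneg _)

theorem ContinuousLinearMap.dist_apply_apply_of_norm_apply_eq {T : E →L[ℝ] E} (hT : ‖T‖ ≤ 1)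
    {x y : E} (hx : ‖T x‖ = ‖x‖) (hy : ‖T y‖ = ‖y‖) : dist (T x) (T y) = dist x y := by
  have hinner : ⟪T x, T y⟫ = ⟪x, y⟫ := by
    rw [← adjoint_inner_left, adjoint_apply_apply_of_norm_apply_eq hT hx]
  rw [dist_eq_norm, dist_eq_norm, ← sq_eq_sq₀ (norm_nonneg _) (norm_nonneg _),
    norm_sub_sq_real, norm_sub_sq_real, hinner, hx, hy]

end Contraction

section Words

variable {ι E : Type*}

def applyWord (T : ι → E → E) (w : List ι) (x : E) : E :=
  w.foldl (fun v i => T i v) x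

@[simp]
theorem applyWord_nil (T : ι → E → E) (x : E) : applyWord T [] x = x := rfl

@[simp]
theorem applyWord_cons (T : ι → E → E) (i : ι) (w : List ι) (x : E) :
    applyWord T (i :: w) x = applyWord T w (T i x) := rfl

@[simp]
theorem applyWord_append (T : ι → E → E) (w w' : List ι) (x : E) :
    applyWord T (w ++ w') x = applyWord T w' (applyWord T w x) :=
  List.foldl_append

theorem applyWord_concat (T : ι → E → E) (w : List ι) (i : ι) (x : E) :
    applyWord T (w ++ [i]) x = T i (applyWord T w x) := by
  simp

variable [NormedAddCommGroup E]

theorem norm_applyWord_le {T : ι → E → E} (hT : ∀ i x, ‖T i x‖ ≤ ‖x‖) (w : List ι) (x : E) :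
    ‖applyWord T w x‖ ≤ ‖x‖ := by
  induction w generalizing x with
  | nil => exact le_rfl
  | cons i w ih => exact (ih _).trans (hT i x)

variable [InnerProductSpace ℝ E] [FiniteDimensional ℝ E]

theorem inner_applyWord (T : ι → E →L[ℝ] E) (w : List ι) (u x : E) :
    ⟪u, applyWord (T ·) w x⟫ =
      ⟪applyWord (fun i => ContinuousLinearMap.adjoint (T i)) w.reverse u, x⟫ := by
  induction w generalizing x with
  | nil => rfl
  | cons i w ih =>
    rw [applyWord_cons, ih, List.reverse_cons, applyWord_concat,
      ContinuousLinearMap.adjoint_inner_left]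

end Words

section Separation

variable {ι E : Type*} [NormedAddCommGroup E] [InnerProductSpace ℝ E] [FiniteDimensional ℝ E]
  {T : ι → E →L[ℝ] E} {p₁ p₂ : ℝ}

theorem le_of_forall_applyWord_concat (hT : ∀ i, ‖T i‖ ≤ 1) {f : E → ℝ} (hf : Continuous f)
    (x₀ : E) {a b : ι} (ha : ∀ w, p₂ ≤ f (applyWord (T ·) (w ++ [a]) x₀))
    (hb : ∀ w, f (applyWord (T ·) (w ++ [b]) x₀) ≤ p₁) : p₂ ≤ p₁ := by
  have hcontr : ∀ i x, ‖T i x‖ ≤ ‖x‖ := fun i x =>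
    (T i).le_of_opNorm_le (hT i) x |>.trans_eq (one_mul _)
  set K := closure (range fun w => applyWord (T ·) w x₀)
  have hK : IsCompact K :=
    (isCompact_closedBall 0 ‖x₀‖).of_isClosed_subset isClosed_closure <|
      closure_minimal (range_subset_iff.2 fun w => mem_closedBall_zero_iff.2 <|
        norm_applyWord_le hcontr w x₀) Metric.isClosed_closedBall
  have hKT : ∀ i, MapsTo (T i) K K := fun i =>
    MapsTo.closure (fun _ ⟨w, hw⟩ => ⟨w ++ [i], hw ▸ applyWord_concat _ w i x₀⟩) (T i).continuous
  obtain ⟨z, hzK, hzmin⟩ :=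
    hK.exists_isMinOn ⟨x₀, subset_closure ⟨[], rfl⟩⟩ continuous_norm.continuousOn
  set M := K ∩ {y | ‖y‖ = ‖z‖}
  have hMT : ∀ i, MapsTo (T i) M M := fun i y ⟨hyK, hy⟩ =>
    ⟨hKT i hyK, le_antisymm (hy ▸ hcontr i y) (hzmin (hKT i hyK))⟩
  have hMnorm : ∀ i, ∀ y ∈ M, ‖T i y‖ = ‖y‖ := fun i y hy =>
    (hMT i hy).2.trans hy.2.symm
  have hMiso : ∀ x ∈ M, ∀ y ∈ M, dist (T a x) (T a y) = dist x y := fun x hx y hy =>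
    (T a).dist_apply_apply_of_norm_apply_eq (hT a) (hMnorm a x hx) (hMnorm a y hy)
  have hM : IsCompact M := hK.inter_right (isClosed_eq continuous_norm continuous_const)
  have hrec := hM.mem_closure_range_iterate_succ (hMT a) hMiso (hMT b ⟨hzK, rfl⟩)
  have hKa : K ⊆ {y | p₂ ≤ f (T a y)} :=
    closure_minimal (range_subset_iff.2 fun w => by simpa [applyWord_concat] using ha w)
      (isClosed_le continuous_const (hf.comp (T a).continuous))
  have hKb : K ⊆ {y | f (T b y) ≤ p₁} :=
    closure_minimal (range_subset_iff.2 fun w => by simpa [applyWord_concat] using hb w)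
      (isClosed_le (hf.comp (T b).continuous) continuous_const)
  calc p₂ ≤ f (T b z) := by
        refine closure_minimal ?_ (isClosed_le continuous_const hf) hrec
        rintro _ ⟨m, rfl⟩
        simp only [mem_ofPred_eq, Function.iterate_succ_apply']
        exact hKa ((hMT a).iterate m (hMT b ⟨hzK, rfl⟩)).1
    _ ≤ p₁ := hKb hzK

theorem le_of_forall_inner_applyWord_cons (hT : ∀ i, ‖T i‖ ≤ 1) (u x₀ : E) {a b : ι}
    (ha : ∀ w, p₂ ≤ ⟪u, applyWord (T ·) (a :: w) x₀⟫)
    (hb : ∀ w, ⟪u, applyWord (T ·) (b :: w) x₀⟫ ≤ p₁) : p₂ ≤ p₁ := by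
  refine le_of_forall_applyWord_concat (T := fun i => ContinuousLinearMap.adjoint (T i))
    (f := fun y => ⟪y, x₀⟫) (fun i => (LinearIsometryEquiv.norm_map _ _).trans_le (hT i))
    (continuous_id.inner continuous_const) u (a := a) (b := b) (fun w => ?_) (fun w => ?_)
  · simpa only [inner_applyWord, List.reverse_cons, List.reverse_reverse] using ha w.reverse
  · simpa only [inner_applyWord, List.reverse_cons, List.reverse_reverse] using hb w.reverse

end Separation

open scoped Matrix.Norms.L2Operator in
theorem DoublyStochastic.norm_toEuclideanCLM_le_one {n : ℕ} {A : Matrix (Fin n) (Fin n) ℝ}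
    (hA : DoublyStochastic A) : ‖toEuclideanCLM (𝕜 := ℝ) A‖ ≤ 1 :=
  l2_opNorm_le_one_of_mem_doublyStochastic (mem_doublyStochastic_iff_sum.2 hA)

namespace PRAC

variable {α : Type} (A : PRAC α)

noncomputable def letter (a : α) : EuclideanSpace ℝ (Fin A.n) →L[ℝ] EuclideanSpace ℝ (Fin A.n) :=
  toEuclideanCLM (n := Fin A.n) (𝕜 := ℝ) (A.V a)

noncomputable def initVec : EuclideanSpace ℝ (Fin A.n) :=
  WithLp.toLp 2 (A.Vhash *ᵥ Pi.single A.q0 1)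

noncomputable def acceptVec : EuclideanSpace ℝ (Fin A.n) :=
  WithLp.toLp 2 fun j => ∑ q ∈ A.F, A.Vdollar q j

theorem norm_letter_le_one (a : α) : ‖A.letter a‖ ≤ 1 :=
  (A.ds a).norm_toEuclideanCLM_le_one

theorem applyWord_letter_toLp (w : List α) (x : Fin A.n → ℝ) :
    applyWord (A.letter ·) w (WithLp.toLp 2 x) =
      WithLp.toLp 2 (w.foldl (fun v a => A.V a *ᵥ v) x) := by
  induction w generalizing x with
  | nil => rfl
  | cons a w ih => exact ih _

theorem accProb_eq_inner (w : List α) :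
    A.accProb w = ⟪A.acceptVec, applyWord (A.letter ·) w A.initVec⟫ := by
  rw [initVec, applyWord_letter_toLp, accProb, acceptVec, EuclideanSpace.inner_toLp_toLp]
  simp only [mulVec, dotProduct, star_trivial]
  rw [Finset.sum_comm]
  exact Finset.sum_congr rfl fun _ _ => by rw [mul_comm, Finset.sum_mul]

end PRAC

/-- `true` plays the role of `a` and `false` of `b`. -/
theorem lastA_and_firstA_not_recognizable_by_prac :
    (¬ ∃ (A : PRAC Bool) (p1 p2 : ℝ),
      A.Recognizes {w : List Bool | w.getLast? = some true} p1 p2) ∧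
    (¬ ∃ (A : PRAC Bool) (p1 p2 : ℝ),
      A.Recognizes {w : List Bool | w.head? = some true} p1 p2) := by
  constructor
  · rintro ⟨A, p1, p2, -, hgap, -, hin, hout⟩
    refine hgap.not_ge (le_of_forall_applyWord_concat (f := fun y => ⟪A.acceptVec, y⟫)
      A.norm_letter_le_one (continuous_const.inner continuous_id) A.initVec
      (a := true) (b := false) (fun w => ?_) (fun w => ?_))
    · simpa [A.accProb_eq_inner] using hin (w ++ [true]) (by simp)
    · simpa [A.accProb_eq_inner] using hout (w ++ [false]) (by simp)
  · rintro ⟨A, p1, p2, -, hgap, -, hin, hout⟩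
    refine hgap.not_ge (le_of_forall_inner_applyWord_cons A.norm_letter_le_one
      A.acceptVec A.initVec (a := true) (b := false) (fun w => ?_) (fun w => ?_))
    · simpa [A.accProb_eq_inner] using hin (true :: w) rfl
    · simpa [A.accProb_eq_inner] using hout (false :: w) (by simp)
end
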